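/- arXiv:1711.01996 — 9 statements merged into one kernel-verified Lean document; each statement's English description precedes it below -/
import Mathlib

section
/- Let Π be a bounded linear projection on a Hilbert space W (Π∘Π = Π) with Π ≠ 0 and Π ≠ 1. Then the operator norm of Π equals the operator norm of 1 − Π. -/
open RealInnerProductSpace

lemma key_proj_norm {W : Type*} [NormedAddCommGroup W] [InnerProductSpace ℝ W] [CompleteSpace W]
    (P : W →L[ℝ] W) (hidem : P.comp P = P) (h0 : P ≠ 0) :
    ‖(1 : W →L[ℝ] W) - P‖ ≤ ‖P‖ := by
  have hPP : ∀ y, P (P y) = P y := fun y => DFunLike.congr_fun hidem y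
  -- ‖P‖ ≥ 1
  have hP1 : (1:ℝ) ≤ ‖P‖ := by
    obtain ⟨x₀, hx₀⟩ := DFunLike.ne_iff.mp h0
    have hy : P x₀ ≠ 0 := by simpa using hx₀
    have hy' : 0 < ‖P x₀‖ := norm_pos_iff.mpr hy
    have := P.le_opNorm (P x₀)
    rw [hPP x₀] at this
    exact (le_mul_iff_one_le_left hy').mp this
  apply ContinuousLinearMap.opNorm_le_bound _ (le_trans zero_le_one hP1)
  intro x
  have happ : ((1 : W →L[ℝ] W) - P) x = x - P x := by
    simp [ContinuousLinearMap.sub_apply]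
  rw [happ]
  set z := x - P x with hzdef
  by_cases hz : z = 0
  · rw [hz, norm_zero]; positivity
  · have hznorm : 0 < ‖z‖ := norm_pos_iff.mpr hz
    set M : Submodule ℝ W := LinearMap.ker (((1 : W →L[ℝ] W) - P) : W →ₗ[ℝ] W) with hMdef
    have hMclosed : IsClosed (M : Set W) := ContinuousLinearMap.isClosed_ker ((1 : W →L[ℝ] W) - P)
    have : CompleteSpace M := hMclosed.completeSpace_coe
    have hMmem : ∀ w : W, w ∈ M ↔ P w = w := by
      intro w
      rw [hMdef, LinearMap.mem_ker]
      constructor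
      · intro h; have : w - P w = 0 := by simpa [ContinuousLinearMap.sub_apply] using h
        exact (sub_eq_zero.mp this).symm
      · intro h; simp [ContinuousLinearMap.sub_apply, h]
    set v : W := ‖z‖⁻¹ • z with hvdef
    have hvnorm : ‖v‖ = 1 := by
      rw [hvdef, norm_smul, norm_inv, norm_norm, inv_mul_cancel₀ (ne_of_gt hznorm)]
    have hPz : P z = 0 := by
      rw [hzdef, map_sub, hPP, sub_self]
    have hPv : P v = 0 := by rw [hvdef, map_smul, hPz, smul_zero]
    set m : W := (M.orthogonalProjectionOnto v : W) with hmdef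
    have hmM : m ∈ M := (M.orthogonalProjectionOnto v).2
    have hperp : ∀ w ∈ M, ⟪v - m, w⟫ = 0 := fun w hw =>
      M.starProjection_inner_eq_zero v w hw
    set c : ℝ := ‖m‖ with hcdef
    have hmv : ⟪v, m⟫ = c ^ 2 := by
      have h1 := hperp m hmM
      rw [inner_sub_left] at h1
      have : ⟪v, m⟫ = ⟪m, m⟫ := by linarith
      rw [this, real_inner_self_eq_norm_sq]
    have hvm_sq : ‖v - m‖ ^ 2 = 1 - c ^ 2 := by
      rw [norm_sub_sq_real, hvnorm, hmv]; ring
    have hc1 : c ^ 2 < 1 := by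
      rcases lt_or_ge (c ^ 2) 1 with h | h
      · exact h
      · exfalso
        have hvm0 : ‖v - m‖ ^ 2 ≤ 0 := by rw [hvm_sq]; linarith
        have : v = m := by
          have := sq_nonneg ‖v - m‖
          have h0' : ‖v - m‖ = 0 := by nlinarith
          exact sub_eq_zero.mp (norm_eq_zero.mp h0')
        have hvM : v ∈ M := this ▸ hmM
        have : P v = v := (hMmem v).mp hvM
        rw [hPv] at this
        rw [← this, norm_zero] at hvnorm
        norm_num at hvnorm
    -- lower bound on ‖x‖²
    have h5 : (1 - c ^ 2) * ‖z‖ ^ 2 ≤ ‖x‖ ^ 2 := by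
      set w : W := -(‖z‖⁻¹ • P x) with hwdef
      have hwM : w ∈ M := by
        rw [hMmem, hwdef, map_neg, map_smul, hPP]
      have hxvw : x = ‖z‖ • (v - w) := by
        rw [hvdef, hwdef, smul_sub, smul_smul, mul_inv_cancel₀ (ne_of_gt hznorm), one_smul,
          smul_neg, smul_smul, mul_inv_cancel₀ (ne_of_gt hznorm), one_smul]
        abel_nf
        rw [hzdef]
        abel
      have hpyth : 1 - c ^ 2 ≤ ‖v - w‖ ^ 2 := by
        have hsplit : v - w = (v - m) + (m - w) := by abel
        have hmw : m - w ∈ M := M.sub_mem hmM hwM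
        have hinner : ⟪v - m, m - w⟫ = 0 := hperp _ hmw
        rw [hsplit, norm_add_sq_real, hinner, hvm_sq]
        nlinarith [sq_nonneg ‖m - w‖]
      have hxnorm : ‖x‖ = ‖z‖ * ‖v - w‖ := by
        rw [hxvw, norm_smul, norm_norm]
      rw [hxnorm, mul_pow]
      nlinarith [sq_nonneg ‖z‖]
    -- lower bound on ‖P‖²
    have h6 : 1 ≤ ‖P‖ ^ 2 * (1 - c ^ 2) := by
      by_cases hc0 : c = 0
      · rw [hc0]; nlinarith
      · have hcpos : 0 < c := lt_of_le_of_ne (norm_nonneg _) (Ne.symm hc0)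
        set a : W := c⁻¹ • m - c • v with hadef
        have hPm : P m = m := (hMmem m).mp hmM
        have hPa : P a = c⁻¹ • m := by
          rw [hadef, map_sub, map_smul, map_smul, hPm, hPv, smul_zero, sub_zero]
        have hPanorm : ‖P a‖ = 1 := by
          rw [hPa, norm_smul, norm_inv, Real.norm_eq_abs, abs_of_pos hcpos, ← hcdef,
            inv_mul_cancel₀ (ne_of_gt hcpos)]
        have hanorm_sq : ‖a‖ ^ 2 = 1 - c ^ 2 := by
          rw [hadef, norm_sub_sq_real, norm_smul, norm_smul, real_inner_smul_left,
            real_inner_smul_right, real_inner_comm, hmv, norm_inv, Real.norm_eq_abs,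
            abs_of_pos hcpos, hvnorm, ← hcdef]
          field_simp
          ring
        have hle := P.le_opNorm a
        rw [hPanorm] at hle
        calc (1:ℝ) = 1 * 1 := by ring
          _ ≤ (‖P‖ * ‖a‖) * (‖P‖ * ‖a‖) :=
              mul_le_mul hle hle zero_le_one (mul_nonneg (norm_nonneg _) (norm_nonneg _))
          _ = ‖P‖ ^ 2 * ‖a‖ ^ 2 := by ring
          _ = ‖P‖ ^ 2 * (1 - c ^ 2) := by rw [hanorm_sq]
    -- combine
    have hsq : ‖z‖ ^ 2 ≤ (‖P‖ * ‖x‖) ^ 2 := by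
      calc ‖z‖ ^ 2 = 1 * ‖z‖ ^ 2 := by ring
        _ ≤ (‖P‖ ^ 2 * (1 - c ^ 2)) * ‖z‖ ^ 2 :=
            mul_le_mul_of_nonneg_right h6 (sq_nonneg _)
        _ = ‖P‖ ^ 2 * ((1 - c ^ 2) * ‖z‖ ^ 2) := by ring
        _ ≤ ‖P‖ ^ 2 * ‖x‖ ^ 2 := mul_le_mul_of_nonneg_left h5 (sq_nonneg _)
        _ = (‖P‖ * ‖x‖) ^ 2 := by ring
    have := Real.sqrt_le_sqrt hsq
    rwa [Real.sqrt_sq (norm_nonneg z),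
      Real.sqrt_sq (mul_nonneg (norm_nonneg P) (norm_nonneg x))] at this

/-- The norm of a nontrivial bounded projection on a Hilbert space equals the
norm of the complementary projection. -/
theorem norm_proj_eq_norm_complementary
    {W : Type*} [NormedAddCommGroup W] [InnerProductSpace ℝ W] [CompleteSpace W]
    (P : W →L[ℝ] W) (hidem : P.comp P = P) (h0 : P ≠ 0) (h1 : P ≠ 1) :
    ‖P‖ = ‖(1 : W →L[ℝ] W) - P‖ := by
  set Q : W →L[ℝ] W := 1 - P with hQdef
  have hQidem : Q.comp Q = Q := by
    have hmul : P * P = P := hidem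
    have : Q * Q = Q := by
      rw [hQdef]
      rw [sub_mul, mul_sub, mul_sub, one_mul, mul_one, hmul]
      abel
    exact this
  have hQ0 : Q ≠ 0 := sub_ne_zero.mpr (Ne.symm h1)
  have h1Q : (1 : W →L[ℝ] W) - Q = P := by rw [hQdef]; abel
  refine le_antisymm ?_ (key_proj_norm P hidem h0)
  have := key_proj_norm Q hQidem hQ0
  rwa [h1Q] at this
end

section
/- Let W be a Hilbert space, W₀ ⊆ W a nontrivial closed subspace, P : W → W the orthogonal projection onto W₀, and Π : W → W any bounded linear projection (Π∘Π = Π) with range W₀. Then ‖Π − P‖² + 1 = ‖Π‖², where ‖·‖ denotes the operator norm. -/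
set_option maxHeartbeats 1000000

/-- Pythagorean theorem for bounded projections on a Hilbert space:
if `Pi` is any bounded projection onto a nontrivial closed subspace `W₀` and
`P` is the orthogonal projection onto `W₀`, then `‖Pi - P‖² + 1 = ‖Pi‖²`. -/
theorem pythagoras_for_projections
    {W : Type*} [NormedAddCommGroup W] [InnerProductSpace ℝ W] [CompleteSpace W]
    (W₀ : Submodule ℝ W) [CompleteSpace W₀] (hW₀ : W₀ ≠ ⊥)
    (Pi : W →L[ℝ] W) (hidem : Pi.comp Pi = Pi)
    (hrange : LinearMap.range (Pi : W →ₗ[ℝ] W) = W₀) :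
    ‖Pi - W₀.subtypeL.comp (W₀.orthogonalProjection)‖ ^ 2 + 1 = ‖Pi‖ ^ 2 := by
  set P : W →L[ℝ] W := W₀.subtypeL.comp (W₀.orthogonalProjection) with hP
  set D : W →L[ℝ] W := Pi - P with hDdef
  have hPmem : ∀ x : W, P x ∈ W₀ := fun x => by simp [hP]
  have hPfix : ∀ x ∈ W₀, P x = x := fun x hx => by
    exact (Submodule.starProjection_eq_self_iff (K := W₀)).2 hx
  have hPorth : ∀ x ∈ W₀ᗮ, P x = 0 := fun x hx => by
    simp [hP, Submodule.starProjection_apply, Submodule.orthogonalProjectionOnto_apply_of_mem_orthogonal hx]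
  have hsub : ∀ x : W, x - P x ∈ W₀ᗮ := fun x => by
    exact Submodule.sub_starProjection_mem_orthogonal (K := W₀) x
  have hPimem : ∀ x : W, Pi x ∈ W₀ := fun x => hrange ▸ LinearMap.mem_range_self _ x
  have hPifix : ∀ x ∈ W₀, Pi x = x := by
    intro x hx
    rw [← hrange] at hx
    obtain ⟨y, rfl⟩ := hx
    have := congrFun (congrArg (fun f : W →L[ℝ] W => (f : W → W)) hidem) y
    simpa using this
  have hD0 : ∀ x ∈ W₀, D x = 0 := fun x hx => by
    simp [hDdef, hPifix x hx, hPfix x hx]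
  have hDmem : ∀ x : W, D x ∈ W₀ := fun x => by
    simpa [hDdef] using Submodule.sub_mem _ (hPimem x) (hPmem x)
  have hDx : ∀ x : W, D x = D (x - P x) := fun x => by
    have h : D (x - P x) = D x - D (P x) := by simp
    rw [h, hD0 (P x) (hPmem x), sub_zero]
  have pyth : ∀ x : W, ‖x‖ ^ 2 = ‖P x‖ ^ 2 + ‖x - P x‖ ^ 2 := by
    intro x
    have hinner : (inner ℝ (P x) (x - P x) : ℝ) = 0 :=
      (Submodule.mem_orthogonal W₀ _).1 (hsub x) _ (hPmem x)
    have := norm_add_sq_real (P x) (x - P x)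
    simpa [hinner] using this
  have hPi1 : 1 ≤ ‖Pi‖ := by
    obtain ⟨w, hw, hw0⟩ := Submodule.exists_mem_ne_zero_of_ne_bot hW₀
    have h1 : ‖w‖ ≤ ‖Pi‖ * ‖w‖ := by
      conv_lhs => rw [← hPifix w hw]
      exact Pi.le_opNorm w
    have hwpos : 0 < ‖w‖ := norm_pos_iff.2 hw0
    exact le_of_mul_le_mul_right (by linarith) hwpos
  have hk1 : 0 ≤ ‖Pi‖ ^ 2 - 1 := by nlinarith
  -- pointwise lower bound
  have key : ∀ x : W, ‖D x‖ ^ 2 ≤ (‖Pi‖ ^ 2 - 1) * ‖x‖ ^ 2 := by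
    intro x
    set v : W := x - P x with hv
    have hvle : ‖v‖ ^ 2 ≤ ‖x‖ ^ 2 := by
      have := pyth x
      nlinarith [sq_nonneg ‖P x‖]
    rcases eq_or_ne (D x) 0 with h0 | h0
    · rw [h0]
      simp only [norm_zero]
      nlinarith [sq_nonneg ‖x‖]
    · have hd : (0 : ℝ) < ‖D x‖ := norm_pos_iff.2 h0
      set d : ℝ := ‖D x‖ with hdd
      set s : ℝ := ‖v‖ ^ 2 with hs
      set c : ℝ := s / d ^ 2 with hc
      have hc0 : 0 ≤ c := div_nonneg (sq_nonneg _) (sq_nonneg _)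
      have hcd : c * d ^ 2 = s := div_mul_cancel₀ _ (by positivity)
      set y : W := c • D x + v with hy
      have hDvx : D v = D x := (hDx x).symm
      have hPiDx : Pi (D x) = D x := hPifix _ (hDmem x)
      have hPiv : Pi v = D x := by
        have : Pi v = P v + D v := by simp [hDdef]
        rw [this, hPorth v (hsub x), hDvx, zero_add]
      have hPiy : Pi y = (c + 1) • D x := by
        rw [hy, map_add, map_smul, hPiDx, hPiv, add_smul, one_smul]
      have hny : ‖y‖ ^ 2 = c ^ 2 * d ^ 2 + s := by
        have hinner : (inner ℝ (c • D x) v : ℝ) = 0 := by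
          have h1 : (inner ℝ (D x) v : ℝ) = 0 :=
            ((Submodule.mem_orthogonal W₀ _).1 (hsub x) _ (hDmem x))
          rw [real_inner_smul_left, h1, mul_zero]
        have hnas := norm_add_sq_real (c • D x) v
        rw [hinner, mul_zero, add_zero] at hnas
        rw [hy, hnas, norm_smul, Real.norm_eq_abs, abs_of_nonneg hc0, hs, hdd]
        ring
      have hnPiy : ‖Pi y‖ = (c + 1) * d := by
        rw [hPiy, norm_smul, Real.norm_eq_abs, abs_of_nonneg (by linarith)]
      have hle : ‖Pi y‖ ≤ ‖Pi‖ * ‖y‖ := Pi.le_opNorm y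
      have hle2 : ((c + 1) * d) ^ 2 ≤ ‖Pi‖ ^ 2 * (c ^ 2 * d ^ 2 + s) := by
        have hy0 : 0 ≤ ‖y‖ := norm_nonneg y
        have := hle
        rw [hnPiy] at this
        nlinarith [norm_nonneg (Pi y), sq_nonneg ‖y‖]
      -- derive d^2 ≤ (‖Pi‖^2 - 1) * s
      have hstep : d ^ 2 ≤ (‖Pi‖ ^ 2 - 1) * s := by
        rw [← hcd] at hle2 ⊢
        have hc1 : (0:ℝ) < c + 1 := by linarith
        have h3 : 0 ≤ (c + 1) * ((‖Pi‖ ^ 2 * c - c - 1) * d ^ 2) := by nlinarith [hle2]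
        nlinarith [h3, hc1]
      calc ‖D x‖ ^ 2 = d ^ 2 := by rw [hdd]
        _ ≤ (‖Pi‖ ^ 2 - 1) * s := hstep
        _ ≤ (‖Pi‖ ^ 2 - 1) * ‖x‖ ^ 2 := by
            apply mul_le_mul_of_nonneg_left _ hk1
            rw [hs]; exact hvle
  -- norm bound for D
  have hDnorm : ‖D‖ ≤ Real.sqrt (‖Pi‖ ^ 2 - 1) := by
    apply ContinuousLinearMap.opNorm_le_bound _ (Real.sqrt_nonneg _)
    intro x
    have h := key x
    calc ‖D x‖ = Real.sqrt (‖D x‖ ^ 2) := (Real.sqrt_sq (norm_nonneg _)).symm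
      _ ≤ Real.sqrt ((‖Pi‖ ^ 2 - 1) * ‖x‖ ^ 2) := Real.sqrt_le_sqrt h
      _ = Real.sqrt (‖Pi‖ ^ 2 - 1) * ‖x‖ := by
          rw [Real.sqrt_mul hk1, Real.sqrt_sq (norm_nonneg x)]
  have hB : ‖D‖ ^ 2 ≤ ‖Pi‖ ^ 2 - 1 := by
    calc ‖D‖ ^ 2 ≤ Real.sqrt (‖Pi‖ ^ 2 - 1) ^ 2 :=
          pow_le_pow_left₀ (norm_nonneg _) hDnorm 2
      _ = ‖Pi‖ ^ 2 - 1 := Real.sq_sqrt hk1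
  -- upper bound for ‖Pi‖
  have hA : ‖Pi‖ ≤ Real.sqrt (‖D‖ ^ 2 + 1) := by
    apply ContinuousLinearMap.opNorm_le_bound _ (Real.sqrt_nonneg _)
    intro x
    have hPix : Pi x = P x + D x := by simp [hDdef]
    have hDb : ‖D x‖ ≤ ‖D‖ * ‖x - P x‖ := by
      rw [hDx x]; exact D.le_opNorm _
    have htri : ‖Pi x‖ ≤ ‖P x‖ + ‖D‖ * ‖x - P x‖ := by
      calc ‖Pi x‖ = ‖P x + D x‖ := by rw [hPix]
        _ ≤ ‖P x‖ + ‖D x‖ := norm_add_le _ _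
        _ ≤ ‖P x‖ + ‖D‖ * ‖x - P x‖ := by linarith
    have hsq : ‖Pi x‖ ^ 2 ≤ (‖D‖ ^ 2 + 1) * ‖x‖ ^ 2 := by
      have hp := pyth x
      have h2 : ‖Pi x‖ ^ 2 ≤ (‖P x‖ + ‖D‖ * ‖x - P x‖) ^ 2 :=
        pow_le_pow_left₀ (norm_nonneg _) htri 2
      nlinarith [h2, sq_nonneg (‖D‖ * ‖P x‖ - ‖x - P x‖), hp]
    have h1 : (0:ℝ) ≤ ‖D‖ ^ 2 + 1 := by positivity
    calc ‖Pi x‖ = Real.sqrt (‖Pi x‖ ^ 2) := (Real.sqrt_sq (norm_nonneg _)).symm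
      _ ≤ Real.sqrt ((‖D‖ ^ 2 + 1) * ‖x‖ ^ 2) := Real.sqrt_le_sqrt hsq
      _ = Real.sqrt (‖D‖ ^ 2 + 1) * ‖x‖ := by
          rw [Real.sqrt_mul h1, Real.sqrt_sq (norm_nonneg x)]
  have hA' : ‖Pi‖ ^ 2 ≤ ‖D‖ ^ 2 + 1 := by
    calc ‖Pi‖ ^ 2 ≤ Real.sqrt (‖D‖ ^ 2 + 1) ^ 2 :=
          pow_le_pow_left₀ (norm_nonneg _) hA 2
      _ = ‖D‖ ^ 2 + 1 := Real.sq_sqrt (by positivity)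
  linarith
end

section
/- Let U and V be real Hilbert spaces, B : U → V' a bounded linear operator induced by a bounded bilinear form b on U × V, and suppose B satisfies the inf-sup condition γ‖u‖_U ≤ ‖Bu‖_{V'} for some γ > 0. Let ℓ ∈ Range(B), u* = B⁻¹ℓ, u_h ∈ U arbitrary, V_r a closed subspace of V, and let ψ_{h,r} ∈ V_r be the unique element satisfying (ψ_{h,r}, v_r)_V = ⟨Bu_h − ℓ, v_r⟩ for all v_r ∈ V_r. Then ‖B(u* − u_h)‖²_{V'} = ‖R_V ψ_{h,r} − Bu_h + ℓ‖²_{V'} + ‖ψ_{h,r}‖²_V, where R_V : V → V' is the Riesz isomorphism. -/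
open scoped RealInnerProductSpace

/-- Error–residual identity for the discrete Riesz representative of the residual
(Lemma 6.1 of Keith–Vaziri Astaneh–Demkowicz). -/
theorem error_residual_identity
    {U V : Type*} [NormedAddCommGroup U] [NormedSpace ℝ U]
    [NormedAddCommGroup V] [InnerProductSpace ℝ V] [CompleteSpace V]
    (B : U →L[ℝ] (V →L[ℝ] ℝ)) (γ : ℝ) (hγ : 0 < γ)
    (hinfsup : ∀ u : U, γ * ‖u‖ ≤ ‖B u‖)
    (ℓ : V →L[ℝ] ℝ) (ustar : U) (hustar : B ustar = ℓ)
    (uh : U) (Vr : Submodule ℝ V) (hVr : IsClosed (Vr : Set V))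
    (ψ : V) (hψmem : ψ ∈ Vr)
    (hψ : ∀ vr ∈ Vr, ⟪ψ, vr⟫ = B uh vr - ℓ vr) :
    ‖B (ustar - uh)‖ ^ 2
      = ‖(InnerProductSpace.toDual ℝ V ψ : V →L[ℝ] ℝ) - B uh + ℓ‖ ^ 2 + ‖ψ‖ ^ 2 := by
  set w : V := (InnerProductSpace.toDual ℝ V).symm (B uh - ℓ) with hw
  have hwd : InnerProductSpace.toDual ℝ V w = B uh - ℓ := by
    simp [hw]
  have hwin : ∀ v : V, ⟪w, v⟫ = B uh v - ℓ v := by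
    intro v
    have := congrArg (fun f : V →L[ℝ] ℝ => f v) hwd
    simpa [InnerProductSpace.toDual_apply_apply] using this
  have horth : ⟪w - ψ, ψ⟫ = 0 := by
    rw [inner_sub_left, hwin ψ, hψ ψ hψmem]
    ring
  have hpyth : ‖w‖ ^ 2 = ‖w - ψ‖ ^ 2 + ‖ψ‖ ^ 2 := by
    have h := norm_add_sq_real (w - ψ) ψ
    rw [sub_add_cancel, horth] at h
    rw [h]; ring
  have h1 : ‖B (ustar - uh)‖ = ‖w‖ := by
    rw [map_sub, hustar]
    have : ℓ - B uh = -(B uh - ℓ) := by abel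
    rw [this, norm_neg, ← hwd, (InnerProductSpace.toDual ℝ V).norm_map]
  have h2 : ‖(InnerProductSpace.toDual ℝ V ψ : V →L[ℝ] ℝ) - B uh + ℓ‖ = ‖w - ψ‖ := by
    have : (InnerProductSpace.toDual ℝ V ψ : V →L[ℝ] ℝ) - B uh + ℓ
        = -(InnerProductSpace.toDual ℝ V (w - ψ)) := by
      rw [map_sub, hwd]; abel
    rw [this, norm_neg, (InnerProductSpace.toDual ℝ V).norm_map]
  rw [h1, h2, hpyth]
end

section
/- Let U, V be Hilbert spaces and B : U → V' a bounded linear operator with closed range satisfying the inf-sup condition. Let P : V → Null(B') be the orthogonal projection onto the null space of the dual operator B' : V → U'. Then for every v ∈ V, ‖v‖²_V = ‖B'v‖²_{U'} + ‖Pv‖²_V, where ‖B'v‖_{U'} denotes the dual norm induced on U' by the energy norm |||u|||_U = ‖Bu‖_{V'}. -/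
open scoped RealInnerProductSpace

set_option maxHeartbeats 1000000 in
/-- Test-space norm splitting (Lemma 3.2): `‖v‖² = |||B'v|||²_{U'} + ‖Pv‖²`, where
`P` is the orthogonal projection onto `Null(B')` and the energy dual norm of `B'v`
is the supremum of `⟨B'v, u⟩ / ‖Bu‖` over nonzero `u`. -/
theorem test_norm_splitting
    {U V : Type*} [NormedAddCommGroup U] [NormedSpace ℝ U]
    [NormedAddCommGroup V] [InnerProductSpace ℝ V] [CompleteSpace V]
    (B : U →L[ℝ] (V →L[ℝ] ℝ)) (γ M : ℝ) (hγ : 0 < γ)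
    (hlow : ∀ u : U, γ * ‖u‖ ≤ ‖B u‖) (hup : ∀ u : U, ‖B u‖ ≤ M * ‖u‖)
    (P : V →L[ℝ] V)
    (hP : ∀ v : V, P v ∈ LinearMap.ker (B.flip : V →ₗ[ℝ] U →L[ℝ] ℝ) ∧
      v - P v ∈ (LinearMap.ker (B.flip : V →ₗ[ℝ] U →L[ℝ] ℝ))ᗮ)
    (v : V) :
    ‖v‖ ^ 2 = (⨆ u : {u : U // u ≠ 0}, |B u.1 v| / ‖B u.1‖) ^ 2 + ‖P v‖ ^ 2 := by
  set w := v - P v with hw_def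
  have hwK : w ∈ (LinearMap.ker (B.flip : V →ₗ[ℝ] U →L[ℝ] ℝ))ᗮ := (hP v).2
  have hPvK : P v ∈ LinearMap.ker (B.flip : V →ₗ[ℝ] U →L[ℝ] ℝ) := (hP v).1
  have hBuPv : ∀ u : U, B u (P v) = 0 := by
    intro u
    have h0 : B.flip (P v) = 0 := hPvK
    have : B.flip (P v) u = 0 := by rw [h0]; rfl
    simpa using this
  have hBuv : ∀ u : U, B u v = B u w := by
    intro u
    have hv : v = P v + w := by simp [hw_def]
    conv_lhs => rw [hv]
    rw [map_add, hBuPv, zero_add]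
  have hinner : ⟪P v, w⟫ = 0 := (Submodule.mem_orthogonal _ _).1 hwK _ hPvK
  have hpyth : ‖v‖ ^ 2 = ‖w‖ ^ 2 + ‖P v‖ ^ 2 := by
    have hv : v = P v + w := by simp [hw_def]
    conv_lhs => rw [hv]
    rw [norm_add_sq_real, hinner]; ring
  have key : (⨆ u : {u : U // u ≠ 0}, |B u.1 v| / ‖B u.1‖) = ‖w‖ := by
    by_cases hne : Nonempty {u : U // u ≠ 0}
    · -- upper bound
      have hub : ∀ u : {u : U // u ≠ 0}, |B u.1 v| / ‖B u.1‖ ≤ ‖w‖ := by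
        intro u
        have hBpos : 0 < ‖B u.1‖ :=
          lt_of_lt_of_le (mul_pos hγ (norm_pos_iff.2 u.2)) (hlow u.1)
        rw [div_le_iff₀ hBpos, hBuv]
        calc |B u.1 w| ≤ ‖B u.1‖ * ‖w‖ := (B u.1).le_opNorm w
          _ = ‖w‖ * ‖B u.1‖ := mul_comm _ _
      have hbdd : BddAbove (Set.range fun u : {u : U // u ≠ 0} => |B u.1 v| / ‖B u.1‖) :=
        ⟨‖w‖, by rintro x ⟨u, rfl⟩; exact hub u⟩
      refine le_antisymm (ciSup_le hub) ?_
      -- lower bound: ‖w‖ ≤ sup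
      -- set up the closure of the range of B and pull it back to V
      set T := InnerProductSpace.toDual ℝ V with hT
      set R : Submodule ℝ (V →L[ℝ] ℝ) :=
        (LinearMap.range (B : U →ₗ[ℝ] (V →L[ℝ] ℝ))).topologicalClosure with hR
      set S : Submodule ℝ V := Submodule.comap T.toLinearEquiv.toLinearMap R with hS
      have hKS : (LinearMap.ker (B.flip : V →ₗ[ℝ] U →L[ℝ] ℝ) : Submodule ℝ V) = Sᗮ := by
        ext x
        constructor
        · intro hx
          rw [Submodule.mem_orthogonal]
          intro s hs
          have hsR : T s ∈ R := Submodule.mem_comap.1 hs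
          have hclosed : IsClosed {φ : V →L[ℝ] ℝ | φ x = 0} :=
            isClosed_eq (ContinuousLinearMap.apply ℝ ℝ x).continuous continuous_const
          have hsub : (↑(LinearMap.range (B : U →ₗ[ℝ] (V →L[ℝ] ℝ))) : Set (V →L[ℝ] ℝ)) ⊆
              {φ : V →L[ℝ] ℝ | φ x = 0} := by
            rintro φ ⟨u, rfl⟩
            have h0 : B.flip x = 0 := hx
            have : B.flip x u = 0 := by rw [h0]; rfl
            simpa using this
          have hsubcl : (↑R : Set (V →L[ℝ] ℝ)) ⊆ {φ : V →L[ℝ] ℝ | φ x = 0} := by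
            rw [hR, Submodule.topologicalClosure_coe]
            exact closure_minimal hsub hclosed
          have hTsx : (T s) x = 0 := hsubcl hsR
          rw [hT] at hTsx
          rw [← InnerProductSpace.toDual_apply_apply (𝕜 := ℝ)]
          exact hTsx
        · intro hx
          have hker : B.flip x = 0 := by
            ext u
            have hmem : T.symm (B u) ∈ S := by
              rw [hS, Submodule.mem_comap]
              simp only [LinearEquiv.coe_coe, LinearIsometryEquiv.coe_toLinearEquiv,
                LinearIsometryEquiv.apply_symm_apply]
              exact Submodule.le_topologicalClosure _ ⟨u, rfl⟩
            have h0 := (Submodule.mem_orthogonal _ _).1 hx _ hmem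
            rw [hT, InnerProductSpace.toDual_symm_apply] at h0
            simpa using h0
          exact hker
      have hSclosed : IsClosed (S : Set V) := by
        rw [hS, Submodule.comap_coe]
        exact (Submodule.isClosed_topologicalClosure _).preimage T.continuous
      haveI : CompleteSpace S := hSclosed.completeSpace_coe
      have hwS : w ∈ S := by
        have h1 : w ∈ Sᗮᗮ := by rw [← hKS]; exact hwK
        rwa [Submodule.orthogonal_orthogonal] at h1
      have hclos : T w ∈ closure (↑(LinearMap.range (B : U →ₗ[ℝ] (V →L[ℝ] ℝ))) :
          Set (V →L[ℝ] ℝ)) := by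
        have hTwR : T w ∈ R := Submodule.mem_comap.1 hwS
        rw [← Submodule.topologicalClosure_coe]
        exact hTwR
      by_cases hw0 : w = 0
      · rw [hw0, norm_zero]
        obtain ⟨u0⟩ := hne
        refine le_ciSup_of_le hbdd u0 ?_
        positivity
      · have hwpos : 0 < ‖w‖ := norm_pos_iff.2 hw0
        refine le_of_forall_pos_le_add fun ε hε => ?_
        set δ := min (ε / 2) (‖w‖ / 2) with hδdef
        have hδpos : 0 < δ := lt_min (by linarith) (by linarith)
        have hδε : δ ≤ ε / 2 := min_le_left _ _
        have hδw : δ ≤ ‖w‖ / 2 := min_le_right _ _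
        obtain ⟨φ, hφmem, hφdist⟩ := Metric.mem_closure_iff.1 hclos δ hδpos
        obtain ⟨u, rfl⟩ := hφmem
        have hnorm : ‖T w - B u‖ < δ := by rwa [dist_eq_norm] at hφdist
        have hTw : ‖T w‖ = ‖w‖ := T.norm_map w
        have hsub1 : ‖T w‖ - ‖B u‖ ≤ ‖T w - B u‖ := norm_sub_norm_le _ _
        have hsub2 : ‖B u‖ - ‖T w‖ ≤ ‖B u - T w‖ := norm_sub_norm_le _ _
        have hsym : ‖B u - T w‖ = ‖T w - B u‖ := norm_sub_rev _ _
        have hBu_lb : ‖w‖ - δ ≤ ‖B u‖ := by rw [hTw] at hsub1; linarith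
        have hBu_ub : ‖B u‖ ≤ ‖w‖ + δ := by rw [hsym] at hsub2; rw [hTw] at hsub2; linarith
        have hBupos : 0 < ‖B u‖ := by linarith
        have hu0 : u ≠ 0 := by
          intro h
          rw [h] at hBupos
          simp at hBupos
        have h1 : (T w) w = ‖w‖ ^ 2 := by
          rw [hT, InnerProductSpace.toDual_apply_apply, real_inner_self_eq_norm_sq]
        have h2 : |(T w - B u) w| ≤ δ * ‖w‖ := by
          calc |(T w - B u) w| ≤ ‖T w - B u‖ * ‖w‖ := (T w - B u).le_opNorm w
            _ ≤ δ * ‖w‖ := by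
                apply mul_le_mul_of_nonneg_right (le_of_lt hnorm) (norm_nonneg _)
        have heq : B u w = (T w) w - (T w - B u) w := by
          rw [ContinuousLinearMap.sub_apply]; ring
        have heval : ‖w‖ ^ 2 - δ * ‖w‖ ≤ |B u w| := by
          have habs : |(T w) w - (T w - B u) w| ≥ |(T w) w| - |(T w - B u) w| :=
            abs_sub_abs_le_abs_sub _ _
          rw [heq]
          have h1' : |(T w) w| = ‖w‖ ^ 2 := by rw [h1]; exact abs_of_nonneg (by positivity)
          linarith
        have hfu : ‖w‖ - 2 * δ ≤ |B u w| / ‖B u‖ := by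
          rw [le_div_iff₀ hBupos]
          have h2δ : ‖w‖ - 2 * δ ≥ 0 := by linarith
          nlinarith [abs_nonneg (B u w)]
        have hle : |B u w| / ‖B u‖ ≤ ⨆ u : {u : U // u ≠ 0}, |B u.1 v| / ‖B u.1‖ := by
          have : |B u v| / ‖B u‖ ≤ ⨆ u : {u : U // u ≠ 0}, |B u.1 v| / ‖B u.1‖ :=
            le_ciSup hbdd (⟨u, hu0⟩ : {u : U // u ≠ 0})
          rwa [hBuv] at this
        linarith
    · -- the index type is empty : U is trivial
      haveI hempty : IsEmpty {u : U // u ≠ 0} := not_nonempty_iff.1 hne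
      have hU : ∀ u : U, u = 0 := by
        intro u
        by_contra h
        exact hne ⟨⟨u, h⟩⟩
      have hsup : (⨆ u : {u : U // u ≠ 0}, |B u.1 v| / ‖B u.1‖) = 0 := by
        rw [iSup, Set.range_eq_empty, Real.sSup_empty]
      have hK : (LinearMap.ker (B.flip : V →ₗ[ℝ] U →L[ℝ] ℝ) : Submodule ℝ V) = ⊤ := by
        ext x
        simp only [LinearMap.mem_ker, Submodule.mem_top, iff_true]
        ext u
        rw [hU u]
        simp
      have hw0 : w = 0 := by
        have h1 := hwK
        rw [hK, Submodule.top_orthogonal_eq_bot] at h1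
        simpa using h1
      rw [hsup, hw0, norm_zero]
  rw [hpyth, key]
end

section
/- With the setting of the closed-range operator B : U → V', let P⊥ be the orthogonal projection of V onto Null(B')^⊥. Then for every v ∈ V, ‖P⊥ v‖_V = sup_{u ∈ U, u ≠ 0} ⟨B'v, u⟩ / ‖Bu‖_{V'}; that is, the V-norm of the projection of v onto the orthogonal complement of Null(B') equals the norm of B'v in the dual of U equipped with the energy norm |||u|||_U = ‖Bu‖_{V'}. -/
open scoped RealInnerProductSpace

/-- The `V`-norm of the orthogonal projection of `v` onto `Null(B')ᗮ` equals the
energy-dual norm of `B'v`: `‖P⊥ v‖ = sup_{u ≠ 0} ⟨B'v, u⟩ / ‖Bu‖`. -/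
theorem norm_proj_orthNull_eq_energy_dual_norm
    {U V : Type*} [NormedAddCommGroup U] [NormedSpace ℝ U]
    [NormedAddCommGroup V] [InnerProductSpace ℝ V] [CompleteSpace V]
    (B : U →L[ℝ] (V →L[ℝ] ℝ)) (γ : ℝ) (hγ : 0 < γ)
    (hlow : ∀ u : U, γ * ‖u‖ ≤ ‖B u‖)
    (Pperp : V →L[ℝ] V)
    (hP : ∀ v : V, Pperp v ∈ (LinearMap.ker (B.flip : V →ₗ[ℝ] U →L[ℝ] ℝ))ᗮ ∧
      v - Pperp v ∈ LinearMap.ker (B.flip : V →ₗ[ℝ] U →L[ℝ] ℝ))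
    (v : V) :
    ‖Pperp v‖ = ⨆ u : {u : U // u ≠ 0}, B u.1 v / ‖B u.1‖ := by
  classical
  set p : V := Pperp v with hp_def
  -- Riesz representatives
  set w : U → V := fun u => (InnerProductSpace.toDual ℝ V).symm (B u) with hw_def
  have key1 : ∀ (u : U) (y : V), ⟪w u, y⟫ = B u y := by
    intro u y
    exact InnerProductSpace.toDual_symm_apply
  have key2 : ∀ u : U, ‖w u‖ = ‖B u‖ := by
    intro u
    exact (InnerProductSpace.toDual ℝ V).symm.norm_map (B u)
  have hw0 : w 0 = 0 := by simp [hw_def]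
  -- B u v = ⟪w u, p⟫
  have hBv : ∀ u : U, B u v = ⟪w u, p⟫ := by
    intro u
    have h2 := (hP v).2
    have h2' : B.flip (v - p) = 0 := h2
    have : B u (v - p) = 0 := by
      have := congrArg (fun f => f u) h2'
      simpa using this
    have hsub : B u v - B u p = 0 := by
      simpa [map_sub] using this
    have : B u v = B u p := by linarith
    rw [this, key1]
  -- every term bounded by ‖p‖
  have hterm : ∀ u : U, B u v / ‖B u‖ ≤ ‖p‖ := by
    intro u
    rw [hBv u, ← key2 u]
    rcases eq_or_lt_of_le (norm_nonneg (w u)) with h0 | h0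
    · rw [← h0]; simp [norm_nonneg]
    · rw [div_le_iff₀ h0]
      calc ⟪w u, p⟫ ≤ ‖w u‖ * ‖p‖ := real_inner_le_norm _ _
        _ = ‖p‖ * ‖w u‖ := mul_comm _ _
  have hbdd : BddAbove (Set.range fun u : {u : U // u ≠ 0} => B u.1 v / ‖B u.1‖) := by
    refine ⟨‖p‖, ?_⟩
    rintro x ⟨u, rfl⟩
    exact hterm u.1
  -- linear map version of w and kernel identification
  let wL : U →ₗ[ℝ] V :=
    ((InnerProductSpace.toDual ℝ V).symm.toLinearEquiv.toLinearMap).comp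
      (B : U →ₗ[ℝ] (V →L[ℝ] ℝ))
  have hwL : ∀ u, wL u = w u := fun u => rfl
  have hker : LinearMap.ker (B.flip : V →ₗ[ℝ] U →L[ℝ] ℝ) = (LinearMap.range wL)ᗮ := by
    ext y
    simp only [LinearMap.mem_ker, Submodule.mem_orthogonal]
    constructor
    · intro hy x hx
      obtain ⟨u, rfl⟩ := hx
      rw [hwL, key1]
      have := congrArg (fun f => f u) hy
      simpa using this
    · intro hy
      ext u
      have := hy (wL u) ⟨u, rfl⟩
      rw [hwL, key1] at this
      simpa using this
  have hpmem : p ∈ (LinearMap.range wL).topologicalClosure := by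
    rw [← Submodule.orthogonal_orthogonal_eq_closure, ← hker]
    exact (hP v).1
  rcases isEmpty_or_nonempty {u : U // u ≠ 0} with hE | hN
  · -- U is trivial
    have hall : ∀ u : U, u = 0 := by
      intro u
      by_contra h
      exact hE.false ⟨u, h⟩
    have hker' : LinearMap.ker (B.flip : V →ₗ[ℝ] U →L[ℝ] ℝ) = ⊤ := by
      ext y
      simp only [LinearMap.mem_ker, Submodule.mem_top, iff_true]
      ext u
      rw [hall u]
      simp
    have hp0 : p = 0 := by
      have := (hP v).1
      rw [hker'] at this
      simpa [Submodule.top_orthogonal_eq_bot] using this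
    rw [hp0, Real.iSup_of_isEmpty]
    simp
  · apply le_antisymm
    · -- ‖p‖ ≤ sup
      by_cases hp0 : p = 0
      · obtain ⟨u₀⟩ := hN
        have h0 : B u₀.1 v / ‖B u₀.1‖ = 0 := by
          rw [hBv, hp0]; simp
        calc ‖p‖ = 0 := by rw [hp0]; simp
          _ = B u₀.1 v / ‖B u₀.1‖ := h0.symm
          _ ≤ _ := le_ciSup hbdd u₀
      · have hpnorm : 0 < ‖p‖ := norm_pos_iff.mpr hp0
        apply le_of_forall_pos_le_add
        intro ε hε
        set ε' : ℝ := min (ε / 2) (‖p‖ / 2) with hε'_def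
        have hε'pos : 0 < ε' := lt_min (by linarith) (by linarith)
        have hε'le : ε' ≤ ε / 2 := min_le_left _ _
        have hε'lep : ε' ≤ ‖p‖ / 2 := min_le_right _ _
        have hclos : p ∈ closure ((LinearMap.range wL : Submodule ℝ V) : Set V) :=
          hpmem
        obtain ⟨x, hx, hdx⟩ := Metric.mem_closure_iff.mp hclos ε' hε'pos
        obtain ⟨u, rfl⟩ := hx
        rw [hwL] at hdx
        have hdist : ‖p - w u‖ < ε' := by
          rwa [dist_eq_norm] at hdx
        -- w u ≠ 0 hence u ≠ 0
        have hwnorm_lb : ‖p‖ - ε' ≤ ‖w u‖ := by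
          have := norm_sub_norm_le p (w u)
          have h2 : ‖p‖ - ‖w u‖ < ε' := lt_of_le_of_lt this hdist
          linarith
        have hwpos : 0 < ‖w u‖ := by
          have : 0 < ‖p‖ - ε' := by linarith
          linarith
        have hu0 : u ≠ 0 := by
          intro h
          rw [h, hw0] at hwpos
          simp at hwpos
        have hwnorm_ub : ‖w u‖ ≤ ‖p‖ + ε' := by
          have := norm_sub_norm_le (w u) p
          have h2 : ‖w u‖ - ‖p‖ ≤ ‖p - w u‖ := by
            rw [norm_sub_rev] at this
            exact this
          linarith
        -- inner bound
        have hinner : ‖p‖ ^ 2 - ε' * ‖p‖ ≤ ⟪w u, p⟫ := by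
          have h1 : ⟪p - w u, p⟫ = ⟪p, p⟫ - ⟪w u, p⟫ := inner_sub_left _ _ _
          have h2 : ⟪p - w u, p⟫ ≤ ‖p - w u‖ * ‖p‖ := real_inner_le_norm _ _
          have h3 : ‖p - w u‖ * ‖p‖ ≤ ε' * ‖p‖ :=
            mul_le_mul_of_nonneg_right (le_of_lt hdist) (norm_nonneg _)
          have h4 : ⟪p, p⟫ = ‖p‖ ^ 2 := real_inner_self_eq_norm_sq p
          linarith
        -- the term at u
        set t : ℝ := B u v / ‖B u‖ with ht_def
        have htval : t = ⟪w u, p⟫ / ‖w u‖ := by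
          rw [ht_def, hBv u, key2 u]
        have hlower : ‖p‖ - 2 * ε' ≤ t := by
          rw [htval, le_div_iff₀ hwpos]
          nlinarith [hwnorm_ub, hinner, hε'lep, hε'pos.le, hpnorm.le]
        have hle_sup : t ≤ ⨆ u : {u : U // u ≠ 0}, B u.1 v / ‖B u.1‖ :=
          le_ciSup hbdd ⟨u, hu0⟩
        linarith
    · exact ciSup_le fun u => hterm u.1
end

section
/- (Refined QoI bound via residuals.) With B : U → V' bounded and bounded below (γ‖u‖ ≤ ‖Bu‖_{V'}) with closed range, and with v*, v_{h,r} both orthogonal to Null(B'), the QoI error e_QoI = b(u* − u_{h,r}, v* − v_{h,r}) satisfies |e_QoI| ≤ γ⁻¹ ‖B u_{h,r} − ℓ‖_{V'} ‖B' v_{h,r} − G‖_{U'}. -/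
open scoped RealInnerProductSpace

/-- Refined QoI error bound via the primal and dual residuals (Theorem 4.5):
`|e_QoI| ≤ γ⁻¹ ‖B u_{h,r} − ℓ‖_{V'} ‖B' v_{h,r} − G‖_{U'}`. -/
theorem qoi_error_residual_bound
    {U V : Type*} [NormedAddCommGroup U] [NormedSpace ℝ U]
    [NormedAddCommGroup V] [InnerProductSpace ℝ V] [CompleteSpace V]
    (B : U →L[ℝ] (V →L[ℝ] ℝ)) (γ : ℝ) (hγ : 0 < γ)
    (hinfsup : ∀ u : U, γ * ‖u‖ ≤ ‖B u‖)
    (ℓ : V →L[ℝ] ℝ) (G : U →L[ℝ] ℝ)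
    (ustar : U) (hustar : B ustar = ℓ)
    (vstar : V) (hvstar : B.flip vstar = G)
    (hvstar_perp : vstar ∈ (LinearMap.ker (B.flip : V →ₗ[ℝ] (U →L[ℝ] ℝ)))ᗮ)
    (uhr : U) (vhr : V) (hvhr_perp : vhr ∈ (LinearMap.ker (B.flip : V →ₗ[ℝ] (U →L[ℝ] ℝ)))ᗮ) :
    |B (ustar - uhr) (vstar - vhr)| ≤
      γ⁻¹ * ‖B uhr - ℓ‖ * ‖B.flip vhr - G‖ := by
  have key : B (ustar - uhr) (vstar - vhr) = -((B.flip vhr - G) (ustar - uhr)) := by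
    have hG : ∀ u, G u = B u vstar := by
      intro u; rw [← hvstar]; rfl
    simp only [map_sub, ContinuousLinearMap.sub_apply, ContinuousLinearMap.flip_apply, hG]
    ring
  have h1 : |B (ustar - uhr) (vstar - vhr)| ≤ ‖B.flip vhr - G‖ * ‖ustar - uhr‖ := by
    rw [key, abs_neg]
    exact (B.flip vhr - G).le_opNorm _
  have h2 : ‖ustar - uhr‖ ≤ γ⁻¹ * ‖B uhr - ℓ‖ := by
    have h := hinfsup (ustar - uhr)
    rw [map_sub, hustar, norm_sub_rev (ℓ) (B uhr)] at h
    calc ‖ustar - uhr‖ = γ⁻¹ * (γ * ‖ustar - uhr‖) := by field_simp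
      _ ≤ γ⁻¹ * ‖B uhr - ℓ‖ := mul_le_mul_of_nonneg_left h (by positivity)
  calc |B (ustar - uhr) (vstar - vhr)| ≤ ‖B.flip vhr - G‖ * ‖ustar - uhr‖ := h1
    _ ≤ ‖B.flip vhr - G‖ * (γ⁻¹ * ‖B uhr - ℓ‖) :=
        mul_le_mul_of_nonneg_left h2 (norm_nonneg _)
    _ = γ⁻¹ * ‖B uhr - ℓ‖ * ‖B.flip vhr - G‖ := by ring
end

section
/- (Data oscillation bound.) Let b : U × V → ℝ be bounded with constant M, Π_r : V → V_r a bounded linear projection satisfying the Fortin condition b(u_h, v − Π_r v) = 0 for all u_h ∈ U_h and v ∈ V. Let u* solve b(u*, v) = ℓ(v) for all v ∈ V and let u_h* be a best approximation of u* in U_h. Then osc(ℓ) := ‖ℓ ∘ (1 − Π_r)‖_{V'} ≤ M ‖Π_r‖ ‖u* − u_h*‖_U. -/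
/-- Pure real-arithmetic core of the Kato-type estimate. -/
lemma kato_real_aux (a s t K : ℝ) (ha0 : 0 < a) (hs0 : 0 < s) (hK0 : 0 < K)
    (htlt : t^2 < s^2 * a^2)
    (hineq : s^4 * (a^2 - 2*t + s^2) ≤ K^2 * (s^4 * a^2 - s^2 * t^2)) :
    s ≤ K * a := by
  have hD : 0 < s^2 * (s^2*a^2 - t^2) :=
    mul_pos (by positivity) (sub_pos.mpr htlt)
  have hgoal2 : s^2 ≤ K^2 * a^2 := by
    refine le_of_mul_le_mul_right ?_ hD
    have e1 : a^2 * (s^4*(a^2-2*t+s^2)) ≤ a^2 * (K^2*(s^4*a^2-s^2*t^2)) :=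
      mul_le_mul_of_nonneg_left hineq (sq_nonneg a)
    have e2 : (0:ℝ) ≤ s^4*(a^2-t)^2 := by positivity
    nlinarith [e1, e2]
  nlinarith [hgoal2, mul_pos hK0 ha0, hs0, sq_nonneg (s - K*a), sq_nonneg (s + K*a)]

open RealInnerProductSpace in
/-- For a nonzero idempotent `P` on a real inner product space,
`‖x - P x‖ ≤ ‖P‖ * ‖x‖` (half of Kato's equality `‖1-P‖ = ‖P‖`). -/
lemma one_sub_proj_norm_le {V : Type*} [NormedAddCommGroup V] [InnerProductSpace ℝ V]
    (P : V →L[ℝ] V) (hidem : P.comp P = P) (h0 : P ≠ 0) (x : V) :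
    ‖x - P x‖ ≤ ‖P‖ * ‖x‖ := by
  have hPP : ∀ y, P (P y) = P y := fun y => congrArg (· y) hidem
  have hK1 : (1 : ℝ) ≤ ‖P‖ := by
    have hpos : 0 < ‖P‖ := norm_pos_iff.mpr h0
    have h3 : ‖P‖ = ‖P.comp P‖ := by rw [hidem]
    have h2 : ‖P.comp P‖ ≤ ‖P‖ * ‖P‖ := P.opNorm_comp_le P
    nlinarith
  set v := x - P x with hv
  have hPv : P v = 0 := by simp [hv, map_sub, hPP]
  by_cases hv0 : v = 0
  · rw [hv0, norm_zero]
    positivity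
  set a := ‖x‖ with ha
  set s := ‖v‖ with hs
  set K := ‖P‖ with hKdef
  set t := ⟪x, v⟫ with ht
  have hs0 : 0 < s := norm_pos_iff.mpr hv0
  have hK0 : 0 < K := lt_of_lt_of_le one_pos hK1
  have hx0 : x ≠ 0 := by
    intro h
    exact hv0 (by simp [hv, h])
  have ha0 : 0 < a := ha ▸ norm_pos_iff.mpr hx0
  have hPx : P x = x - v := by simp [hv]
  clear_value t K s a v
  -- Cauchy–Schwarz
  have hcs : |t| ≤ a * s := by
    rw [ht, ha, hs]; exact abs_real_inner_le_norm x v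
  rcases lt_or_eq_of_le hcs with hlt | heq
  · -- strict case
    have hw : P ((s^2) • x - t • v) = (s^2) • P x := by
      simp [map_sub, map_smul, hPv]
    have hb1 : ‖P ((s^2) • x - t • v)‖ ≤ K * ‖(s^2) • x - t • v‖ := by
      rw [hKdef]; exact P.le_opNorm _
    have hnsm : ‖(s^2) • P x‖ = s^2 * ‖P x‖ := by
      rw [norm_smul]
      simp [abs_of_nonneg (sq_nonneg s)]
    have hwsq : ‖(s^2) • x - t • v‖^2 = s^4 * a^2 - s^2 * t^2 := by
      rw [ha, hs, ht, norm_sub_sq_real, real_inner_smul_left, real_inner_smul_right,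
        norm_smul, norm_smul, Real.norm_eq_abs, Real.norm_eq_abs,
        abs_of_nonneg (sq_nonneg (‖v‖)), mul_pow, mul_pow, sq_abs]
      ring
    have hPxsq : ‖P x‖^2 = a^2 - 2*t + s^2 := by
      rw [ha, hs, ht, hPx, norm_sub_sq_real]
    have hineq : s^4 * (a^2 - 2*t + s^2) ≤ K^2 * (s^4 * a^2 - s^2 * t^2) := by
      have hsq : (s^2 * ‖P x‖)^2 ≤ (K * ‖(s^2) • x - t • v‖)^2 := by
        apply sq_le_sq'
        · nlinarith [norm_nonneg (P x), norm_nonneg ((s^2) • x - t • v), sq_nonneg s,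
            mul_nonneg (sq_nonneg s) (norm_nonneg (P x)), hK0.le, hnsm, hw, hb1]
        · rw [← hnsm, ← hw]; exact hb1
      calc s^4 * (a^2 - 2*t + s^2) = (s^2 * ‖P x‖)^2 := by rw [mul_pow, hPxsq]; ring
        _ ≤ (K * ‖(s^2) • x - t • v‖)^2 := hsq
        _ = K^2 * (s^4 * a^2 - s^2 * t^2) := by rw [mul_pow, hwsq]
    have htlt : t^2 < s^2 * a^2 := by
      have h1 := mul_self_lt_mul_self (abs_nonneg t) hlt
      rw [abs_mul_abs_self] at h1
      nlinarith [h1]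
    exact kato_real_aux a s t K ha0 hs0 hK0 htlt hineq
  · -- equality in Cauchy–Schwarz: v parallel to x, forces P x = 0, v = x
    have hPx0 : P x = 0 := by
      have has : (0:ℝ) ≤ a * s := by positivity
      rcases (abs_eq has).mp heq with h | h
      · rw [ht, ha, hs] at h
        have h2 := inner_eq_norm_mul_iff_real.mp h
        have happ : P ((‖v‖ : ℝ) • x) = P ((‖x‖ : ℝ) • v) := by rw [h2]
        rw [map_smul, map_smul, hPv, smul_zero] at happ
        rcases smul_eq_zero.mp happ with h' | h'
        · exact absurd h' (by simpa [hs] using hs0.ne')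
        · exact h'
      · rw [ht, ha, hs] at h
        have h3 : ⟪x, -v⟫ = ‖x‖ * ‖-v‖ := by
          rw [inner_neg_right, norm_neg, h]; ring
        have h2 := inner_eq_norm_mul_iff_real.mp h3
        have happ : P ((‖-v‖ : ℝ) • x) = P ((‖x‖ : ℝ) • (-v)) := by rw [h2]
        rw [map_smul, map_smul, map_neg, hPv, neg_zero, smul_zero] at happ
        rcases smul_eq_zero.mp happ with h' | h'
        · rw [norm_neg] at h'
          exact absurd h' (by simpa [hs] using hs0.ne')
        · exact h'
    have hvx : v = x := by rw [hv, hPx0, sub_zero]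
    have hsa : s = a := by rw [hs, hvx, ha]
    rw [hsa]
    nlinarith [hK1, ha0]

/-- Data oscillation bound (part of Theorem 6.4):
`osc(ℓ) = ‖ℓ ∘ (1 − Π_r)‖_{V'} ≤ M ‖Π_r‖ ‖u* − u_h*‖_U`. -/
theorem data_oscillation_bound
    {U V : Type*} [NormedAddCommGroup U] [NormedSpace ℝ U]
    [NormedAddCommGroup V] [InnerProductSpace ℝ V] [CompleteSpace V]
    (b : U →L[ℝ] (V →L[ℝ] ℝ)) (M : ℝ) (hM0 : 0 ≤ M)
    (hM : ∀ (u : U) (v : V), |b u v| ≤ M * ‖u‖ * ‖v‖)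
    (Uh : Submodule ℝ U) (Vr : Submodule ℝ V)
    (Pir : V →L[ℝ] V) (hidem : Pir.comp Pir = Pir)
    (h0 : Pir ≠ 0) (h1 : Pir ≠ 1)
    (hrange : ∀ v : V, Pir v ∈ Vr)
    (hFortin : ∀ uh ∈ Uh, ∀ v : V, b uh (v - Pir v) = 0)
    (ℓ : V →L[ℝ] ℝ) (ustar : U) (hustar : ∀ v : V, b ustar v = ℓ v)
    (uhstar : U) (huhstar : uhstar ∈ Uh) :
    ‖ℓ.comp ((1 : V →L[ℝ] V) - Pir)‖ ≤ M * ‖Pir‖ * ‖ustar - uhstar‖ := by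
  have hPP : ∀ y, Pir (Pir y) = Pir y := fun y => congrArg (· y) hidem
  apply ContinuousLinearMap.opNorm_le_bound
  · exact mul_nonneg (mul_nonneg hM0 (norm_nonneg _)) (norm_nonneg _)
  intro v
  have happ : (ℓ.comp ((1 : V →L[ℝ] V) - Pir)) v = ℓ (v - Pir v) := by
    simp [ContinuousLinearMap.comp_apply, ContinuousLinearMap.sub_apply]
  rw [happ]
  -- Fortin condition kills the uhstar term
  have hF : b uhstar (v - Pir v) = 0 := by
    have := hFortin uhstar huhstar (v - Pir v)
    simpa [map_sub, hPP] using this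
  have hrepr : ℓ (v - Pir v) = b (ustar - uhstar) (v - Pir v) := by
    rw [map_sub b, ContinuousLinearMap.sub_apply, hF, sub_zero, hustar]
  rw [Real.norm_eq_abs, hrepr]
  calc |b (ustar - uhstar) (v - Pir v)|
      ≤ M * ‖ustar - uhstar‖ * ‖v - Pir v‖ := hM _ _
    _ ≤ M * ‖ustar - uhstar‖ * (‖Pir‖ * ‖v‖) := by
        apply mul_le_mul_of_nonneg_left (one_sub_proj_norm_le Pir hidem h0 v)
        exact mul_nonneg hM0 (norm_nonneg _)
    _ = M * ‖Pir‖ * ‖ustar - uhstar‖ * ‖v‖ := by ring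
end

section
/- (Improved DPG reliability estimate.) Let b : U × V → ℝ satisfy the inf-sup condition γ‖u‖_U ≤ ‖Bu‖_{V'} and let Π_r : V → V_r be a bounded projection satisfying the Fortin condition b(u_h, v − Π_r v) = 0 for all u_h ∈ U_h, v ∈ V. Let u* solve b(u*, v) = ℓ(v) for all v ∈ V, and u_h ∈ U_h be arbitrary. Then γ² ‖u* − u_h‖²_U ≤ η_r(u_h)² + (η_r(u_h)·√(‖Π_r‖² − 1) + osc(ℓ))², where η_r(u_h) = sup_{v_r ∈ V_r}(ℓ(v_r) − b(u_h, v_r))/‖v_r‖_V and osc(ℓ) = ‖ℓ∘(1 − Π_r)‖_{V'}. -/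
open scoped RealInnerProductSpace

set_option maxHeartbeats 2000000 in
/-- Improved a posteriori reliability estimate for DPG methods (Theorem 6.4):
`γ² ‖u* − u_h‖² ≤ η_r(u_h)² + (η_r(u_h)·√(‖Π_r‖² − 1) + osc(ℓ))²`. -/
theorem dpg_improved_reliability
    {U V : Type*} [NormedAddCommGroup U] [NormedSpace ℝ U]
    [NormedAddCommGroup V] [InnerProductSpace ℝ V] [CompleteSpace V]
    (B : U →L[ℝ] (V →L[ℝ] ℝ)) (γ : ℝ) (hγ : 0 < γ)
    (hinfsup : ∀ u : U, γ * ‖u‖ ≤ ‖B u‖)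
    (Uh : Submodule ℝ U) (Vr : Submodule ℝ V) (hVr : IsClosed (Vr : Set V))
    (Pir : V →L[ℝ] V) (hidem : Pir.comp Pir = Pir)
    (hrange : ∀ v : V, Pir v ∈ Vr)
    (hFortin : ∀ uh ∈ Uh, ∀ v : V, B uh (v - Pir v) = 0)
    (ℓ : V →L[ℝ] ℝ) (ustar : U) (hustar : B ustar = ℓ)
    (uh : U) (huh : uh ∈ Uh) :
    γ ^ 2 * ‖ustar - uh‖ ^ 2 ≤
      (⨆ vr : {v : V // v ∈ Vr ∧ v ≠ 0}, (ℓ vr.1 - B uh vr.1) / ‖vr.1‖) ^ 2 +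
      ((⨆ vr : {v : V // v ∈ Vr ∧ v ≠ 0}, (ℓ vr.1 - B uh vr.1) / ‖vr.1‖) *
          Real.sqrt (‖Pir‖ ^ 2 - 1) +
        ‖ℓ.comp ((1 : V →L[ℝ] V) - Pir)‖) ^ 2 := by
  haveI : CompleteSpace Vr := hVr.completeSpace_coe
  set R : V →L[ℝ] ℝ := ℓ - B uh with hRdef
  have hRapp : ∀ v : V, R v = ℓ v - B uh v := fun v => rfl
  set η : ℝ := ⨆ vr : {v : V // v ∈ Vr ∧ v ≠ 0}, (ℓ vr.1 - B uh vr.1) / ‖vr.1‖ with hηdef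
  set osc : ℝ := ‖ℓ.comp ((1 : V →L[ℝ] V) - Pir)‖ with hoscdef
  set c : ℝ := ‖Pir‖ with hcdef
  have hosc0 : 0 ≤ osc := norm_nonneg _
  have hc0 : 0 ≤ c := norm_nonneg _
  -- boundedness of the sup family
  have hbdd : BddAbove (Set.range fun vr : {v : V // v ∈ Vr ∧ v ≠ 0} =>
      (ℓ vr.1 - B uh vr.1) / ‖vr.1‖) := by
    refine ⟨‖R‖, ?_⟩
    rintro x ⟨vr, rfl⟩
    have hv0 : (0:ℝ) < ‖vr.1‖ := norm_pos_iff.mpr vr.2.2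
    rw [div_le_iff₀ hv0]
    calc ℓ vr.1 - B uh vr.1 = R vr.1 := (hRapp vr.1).symm
      _ ≤ |R vr.1| := le_abs_self _
      _ = ‖R vr.1‖ := rfl
      _ ≤ ‖R‖ * ‖vr.1‖ := R.le_opNorm _
  -- nonnegativity of η
  have hη0 : 0 ≤ η := by
    rcases isEmpty_or_nonempty {v : V // v ∈ Vr ∧ v ≠ 0} with h | h
    · rw [hηdef, Real.iSup_of_isEmpty]
    · obtain ⟨⟨v, hv, hv0⟩⟩ := h
      have h1 : (ℓ v - B uh v) / ‖v‖ ≤ η := le_ciSup hbdd ⟨v, hv, hv0⟩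
      have h2 : (ℓ (-v) - B uh (-v)) / ‖(-v : V)‖ ≤ η :=
        le_ciSup hbdd ⟨-v, Vr.neg_mem hv, neg_ne_zero.mpr hv0⟩
      rw [map_neg, map_neg, norm_neg] at h2
      have hv0' : (0:ℝ) < ‖v‖ := norm_pos_iff.mpr hv0
      have h3 : (-(ℓ v - B uh v)) / ‖v‖ ≤ η := by
        have he : -ℓ v - -B uh v = -(ℓ v - B uh v) := by ring
        rwa [he] at h2
      have h4 := (add_div (ℓ v - B uh v) (-(ℓ v - B uh v)) ‖v‖).symm
      have h5 : (ℓ v - B uh v) / ‖v‖ + (-(ℓ v - B uh v)) / ‖v‖ = 0 := by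
        rw [h4]; simp
      linarith
  -- η bounds the residual on Vr
  have hηbound : ∀ v ∈ Vr, R v ≤ η * ‖v‖ := by
    intro v hv
    by_cases hv0 : v = 0
    · simp [hv0]
    · have hv0' : (0:ℝ) < ‖v‖ := norm_pos_iff.mpr hv0
      have h1 : (ℓ v - B uh v) / ‖v‖ ≤ η := le_ciSup hbdd ⟨v, hv, hv0⟩
      rw [hRapp]
      calc ℓ v - B uh v = (ℓ v - B uh v) / ‖v‖ * ‖v‖ := by field_simp
        _ ≤ η * ‖v‖ := mul_le_mul_of_nonneg_right h1 hv0'.le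
  have hidem' : ∀ v : V, Pir (Pir v) = Pir v := by
    intro v
    have := ContinuousLinearMap.ext_iff.mp hidem v
    simpa using this
  -- key projection norm bound
  have hproj : ∀ w : V, (inner ℝ w (Pir w) : ℝ) = 0 → ‖Pir w‖ ≤ Real.sqrt (c ^ 2 - 1) * ‖w‖ := by
    intro w hw
    set a : ℝ := ‖Pir w‖ with hadef
    have ha0 : 0 ≤ a := norm_nonneg _
    have key : ∀ t : ℝ, (1 + t) ^ 2 * a ^ 2 ≤ c ^ 2 * (‖w‖ ^ 2 + t ^ 2 * a ^ 2) := by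
      intro t
      have h1 : ‖Pir (w + t • Pir w)‖ ≤ c * ‖w + t • Pir w‖ := Pir.le_opNorm _
      have h2 : Pir (w + t • Pir w) = (1 + t) • Pir w := by
        rw [map_add, map_smul, hidem', add_smul, one_smul]
      have h3 : ‖Pir (w + t • Pir w)‖ ^ 2 = (1 + t) ^ 2 * a ^ 2 := by
        rw [h2, norm_smul]
        simp [mul_pow, sq_abs, hadef]
      have h4 : ‖w + t • Pir w‖ ^ 2 = ‖w‖ ^ 2 + t ^ 2 * a ^ 2 := by
        rw [@norm_add_sq_real, inner_smul_right, hw, norm_smul]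
        simp [mul_pow, sq_abs, hadef]
      have h5 := pow_le_pow_left₀ (norm_nonneg (Pir (w + t • Pir w))) h1 2
      rw [h3, mul_pow, h4] at h5
      exact h5
    have hkey2 : a ^ 2 ≤ (c ^ 2 - 1) * ‖w‖ ^ 2 ∨ a = 0 := by
      by_cases ha : a = 0
      · exact Or.inr ha
      · have ha' : 0 < a := lt_of_le_of_ne ha0 (Ne.symm ha)
        rcases lt_trichotomy c 1 with hc | hc | hc
        · exfalso
          have h6 : a ≤ c * a := by
            have h7 := Pir.le_opNorm (Pir w)
            rwa [hidem'] at h7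
          nlinarith
        · exfalso
          have h := key (‖w‖ ^ 2 / a ^ 2)
          rw [hc] at h
          have ha2 : (0:ℝ) < a ^ 2 := by positivity
          have h8 := div_mul_cancel₀ (‖w‖ ^ 2) (ne_of_gt ha2)
          nlinarith [sq_nonneg (‖w‖ ^ 2 / a ^ 2), sq_nonneg ‖w‖]
        · left
          have hd : (0:ℝ) < c ^ 2 - 1 := by nlinarith
          have h := key (1 / (c ^ 2 - 1))
          have hd' : (c ^ 2 - 1) ≠ 0 := ne_of_gt hd
          have h2 : (c ^ 2 - 1) ^ 2 * ((1 + 1 / (c ^ 2 - 1)) ^ 2 * a ^ 2) ≤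
              (c ^ 2 - 1) ^ 2 * (c ^ 2 * (‖w‖ ^ 2 + (1 / (c ^ 2 - 1)) ^ 2 * a ^ 2)) :=
            mul_le_mul_of_nonneg_left h (by positivity)
          have e1 : (c ^ 2 - 1) ^ 2 * ((1 + 1 / (c ^ 2 - 1)) ^ 2 * a ^ 2)
              = (c ^ 2) ^ 2 * a ^ 2 := by
            field_simp
            ring
          have e2 : (c ^ 2 - 1) ^ 2 * (c ^ 2 * (‖w‖ ^ 2 + (1 / (c ^ 2 - 1)) ^ 2 * a ^ 2))
              = c ^ 2 * (c ^ 2 - 1) ^ 2 * ‖w‖ ^ 2 + c ^ 2 * a ^ 2 := by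
            field_simp
          rw [e1, e2] at h2
          have hc2 : (0:ℝ) < c ^ 2 := by positivity
          nlinarith [mul_pos hc2 hd, mul_pos hd (mul_pos hc2 hd)]
    rcases hkey2 with h | h
    · have h9 : a ≤ Real.sqrt ((c ^ 2 - 1) * ‖w‖ ^ 2) := by
        rw [show a = Real.sqrt (a ^ 2) from (Real.sqrt_sq ha0).symm]
        exact Real.sqrt_le_sqrt h
      calc a ≤ Real.sqrt ((c ^ 2 - 1) * ‖w‖ ^ 2) := h9
        _ = Real.sqrt (c ^ 2 - 1) * ‖w‖ := by
          rw [Real.sqrt_mul' _ (by positivity : (0:ℝ) ≤ ‖w‖ ^ 2),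
            Real.sqrt_sq (norm_nonneg w)]
    · rw [h]
      positivity
  -- the combined coefficient
  set s : ℝ := η * Real.sqrt (c ^ 2 - 1) + osc with hsdef
  have hs0 : 0 ≤ s := by
    have : 0 ≤ η * Real.sqrt (c ^ 2 - 1) := mul_nonneg hη0 (Real.sqrt_nonneg _)
    linarith
  -- pointwise residual bound
  have hclaim : ∀ v : V, R v ≤ Real.sqrt (η ^ 2 + s ^ 2) * ‖v‖ := by
    intro v
    set Pv : V := (Vr.orthogonalProjectionOnto v : V) with hPv
    set w : V := v - Pv with hwdef
    have hPvmem : Pv ∈ Vr := by rw [hPv]; exact (Vr.orthogonalProjectionOnto v).2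
    have hwperp : w ∈ Vrᗮ := Submodule.sub_starProjection_mem_orthogonal (K := Vr) v
    have hinner : (inner ℝ w (Pir w) : ℝ) = 0 := by
      have h := (Submodule.mem_orthogonal Vr w).mp hwperp (Pir w) (hrange w)
      rwa [real_inner_comm] at h
    have hveq : v = Pv + w := by rw [hwdef]; abel
    have hsplit : R v = R Pv + R w := by
      conv_lhs => rw [hveq]
      rw [map_add]
    have h1 : R Pv ≤ η * ‖Pv‖ := hηbound Pv hPvmem
    have hB : B uh w = B uh (Pir w) := by
      have h := hFortin uh huh w
      rw [map_sub] at h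
      linarith
    have hsplit2 : R w = R (Pir w) + (ℓ.comp ((1 : V →L[ℝ] V) - Pir)) w := by
      have h10 : (ℓ.comp ((1 : V →L[ℝ] V) - Pir)) w = ℓ w - ℓ (Pir w) := by
        simp [ContinuousLinearMap.sub_apply]
      rw [h10, hRapp, hRapp, hB]
      ring
    have h2 : R (Pir w) ≤ η * (Real.sqrt (c ^ 2 - 1) * ‖w‖) :=
      (hηbound _ (hrange w)).trans (by
        exact mul_le_mul_of_nonneg_left (hproj w hinner) hη0)
    have h3 : (ℓ.comp ((1 : V →L[ℝ] V) - Pir)) w ≤ osc * ‖w‖ := by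
      calc (ℓ.comp ((1 : V →L[ℝ] V) - Pir)) w ≤ ‖(ℓ.comp ((1 : V →L[ℝ] V) - Pir)) w‖ :=
            le_abs_self _
        _ ≤ osc * ‖w‖ := (ℓ.comp ((1 : V →L[ℝ] V) - Pir)).le_opNorm w
    have hRv : R v ≤ η * ‖Pv‖ + s * ‖w‖ := by
      rw [hsplit, hsplit2, hsdef]
      nlinarith [norm_nonneg w]
    have hpyth : ‖Pv‖ ^ 2 + ‖w‖ ^ 2 = ‖v‖ ^ 2 := by
      have hperp : (inner ℝ Pv w : ℝ) = 0 := (Submodule.mem_orthogonal Vr w).mp hwperp Pv hPvmem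
      have : ‖v‖ ^ 2 = ‖Pv + w‖ ^ 2 := by rw [← hveq]
      rw [this, @norm_add_sq_real, hperp]
      ring
    have hp0 : (0:ℝ) ≤ ‖Pv‖ := norm_nonneg _
    have hq0 : (0:ℝ) ≤ ‖w‖ := norm_nonneg _
    have h6 : 0 ≤ η * ‖Pv‖ + s * ‖w‖ := by positivity
    have h5 : (η * ‖Pv‖ + s * ‖w‖) ^ 2 ≤ (η ^ 2 + s ^ 2) * ‖v‖ ^ 2 := by
      nlinarith [sq_nonneg (η * ‖w‖ - s * ‖Pv‖)]
    have hcs : η * ‖Pv‖ + s * ‖w‖ ≤ Real.sqrt (η ^ 2 + s ^ 2) * ‖v‖ := by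
      calc η * ‖Pv‖ + s * ‖w‖ = Real.sqrt ((η * ‖Pv‖ + s * ‖w‖) ^ 2) := (Real.sqrt_sq h6).symm
        _ ≤ Real.sqrt ((η ^ 2 + s ^ 2) * ‖v‖ ^ 2) := Real.sqrt_le_sqrt h5
        _ = Real.sqrt (η ^ 2 + s ^ 2) * ‖v‖ := by
            rw [Real.sqrt_mul (by positivity), Real.sqrt_sq (norm_nonneg v)]
    exact hRv.trans hcs
  have hRnorm : ‖R‖ ≤ Real.sqrt (η ^ 2 + s ^ 2) := by
    apply ContinuousLinearMap.opNorm_le_bound _ (Real.sqrt_nonneg _)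
    intro v
    have h1 := hclaim v
    have h2 := hclaim (-v)
    rw [map_neg, norm_neg] at h2
    rw [Real.norm_eq_abs]
    exact abs_le.mpr ⟨by linarith, h1⟩
  have hfin : γ * ‖ustar - uh‖ ≤ ‖R‖ := by
    have h := hinfsup (ustar - uh)
    rwa [map_sub, hustar] at h
  have hK2 : ‖R‖ ^ 2 ≤ η ^ 2 + s ^ 2 := by
    have h := pow_le_pow_left₀ (norm_nonneg R) hRnorm 2
    rwa [Real.sq_sqrt (by positivity)] at h
  calc γ ^ 2 * ‖ustar - uh‖ ^ 2 = (γ * ‖ustar - uh‖) ^ 2 := by ring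
    _ ≤ ‖R‖ ^ 2 := pow_le_pow_left₀ (by positivity) hfin 2
    _ ≤ η ^ 2 + s ^ 2 := hK2
end

section
/- (Perturbed influence function for the adjoint graph norm.) Let L* : V → L²(Ω)ⁿ-type target H be a bounded linear operator, and let b(u, v) = (u, L*v)_H + ⟨û, v⟩ for (u, û) ∈ U = H × Û and v ∈ V (with ⟨·,·⟩ a bounded bilinear pairing Û × V → ℝ). Equip V with the inner product (v, w)_V = (L*v, L*w)_H + α²(v, w)_H for α > 0, assuming this is an inner product making V Hilbert. Suppose (ω*, v*) ∈ U × V solves (v*, v)_V = b(ω*, v) for all v ∈ V and b(u, v*) = (g, u)_H + Ĝ(û) for all u = (u, û) ∈ U, with g ∈ H and Ĝ ∈ Û'. Then ω* = (g, 0) + α² ω̃, where ω̃ = (ω̃, ω̂̃) ∈ U is the unique solution of (ω̃, L*v)_H + ⟨ω̂̃, v⟩ = (v*, v)_H for all v ∈ V. -/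
open scoped RealInnerProductSpace

/-- Perturbed influence function for the adjoint graph norm (Lemma 7.1):
with the adjoint graph inner product on `V`, the trial-space influence function
satisfies `ω* = (g, 0) + α² ω̃`, where `ω̃` is the unique solution of
`(ω̃, L*v)_H + ⟨ω̂̃, v⟩ = (v*, v)_H` for all `v ∈ V`. -/
theorem adjoint_graph_norm_influence
    {H Uhat V : Type*}
    [NormedAddCommGroup H] [InnerProductSpace ℝ H] [CompleteSpace H]
    [NormedAddCommGroup Uhat] [InnerProductSpace ℝ Uhat] [CompleteSpace Uhat]
    [NormedAddCommGroup V] [InnerProductSpace ℝ V] [CompleteSpace V]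
    (Lstar : V →L[ℝ] H) (pairing : Uhat →L[ℝ] (V →L[ℝ] ℝ))
    (E : V →L[ℝ] H) (α : ℝ) (hα : 0 < α)
    (hVinner : ∀ v w : V, ⟪v, w⟫ = ⟪Lstar v, Lstar w⟫ + α ^ 2 * ⟪E v, E w⟫)
    (hunique : ∀ F : V →L[ℝ] ℝ, ∃! ω : H × Uhat,
      ∀ v : V, ⟪ω.1, Lstar v⟫ + pairing ω.2 v = F v)
    (g : H) (Ghat : Uhat →L[ℝ] ℝ)
    (ωstar : H × Uhat) (vstar : V)
    (h1 : ∀ v : V, ⟪vstar, v⟫ = ⟪ωstar.1, Lstar v⟫ + pairing ωstar.2 v)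
    (h2 : ∀ u : H × Uhat,
      ⟪u.1, Lstar vstar⟫ + pairing u.2 vstar = ⟪g, u.1⟫ + Ghat u.2) :
    (∃! ω : H × Uhat,
      ∀ v : V, ⟪ω.1, Lstar v⟫ + pairing ω.2 v = ⟪E vstar, E v⟫) ∧
    (∀ ω : H × Uhat,
      (∀ v : V, ⟪ω.1, Lstar v⟫ + pairing ω.2 v = ⟪E vstar, E v⟫) →
        ωstar = (g, 0) + α ^ 2 • ω) := by
  have hα2 : (α : ℝ) ^ 2 ≠ 0 := pow_ne_zero 2 (ne_of_gt hα)
  -- Step 1: Lstar vstar = g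
  have hLg : Lstar vstar = g := by
    have h := fun u : H => h2 (u, 0)
    simp only [map_zero, ContinuousLinearMap.zero_apply, add_zero] at h
    apply ext_inner_left ℝ
    intro u
    exact (h u).trans (real_inner_comm u g)
  -- Step 2: the key identity
  have key : ∀ v : V, ⟪ωstar.1 - g, Lstar v⟫ + pairing ωstar.2 v
      = α ^ 2 * ⟪E vstar, E v⟫ := by
    intro v
    have := h1 v
    rw [hVinner vstar v, hLg] at this
    rw [inner_sub_left]
    linarith
  -- the candidate solution
  set ω' : H × Uhat := ((α ^ 2)⁻¹ • (ωstar.1 - g), (α ^ 2)⁻¹ • ωstar.2) with hω'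
  have hω'sol : ∀ v : V, ⟪ω'.1, Lstar v⟫ + pairing ω'.2 v = ⟪E vstar, E v⟫ := by
    intro v
    simp only [hω', real_inner_smul_left, map_smul, ContinuousLinearMap.smul_apply, smul_eq_mul]
    rw [← mul_add, key v, inv_mul_cancel_left₀ hα2]
  -- the functional
  set F : V →L[ℝ] ℝ := (innerSL ℝ (E vstar)).comp E with hF
  have hFval : ∀ v : V, F v = ⟪E vstar, E v⟫ := fun v => rfl
  obtain ⟨ω₀, hω₀, huniq⟩ := hunique F
  have hEU : ∃! ω : H × Uhat,
      ∀ v : V, ⟪ω.1, Lstar v⟫ + pairing ω.2 v = ⟪E vstar, E v⟫ := by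
    refine ⟨ω₀, fun v => (hω₀ v).trans (hFval v), fun ω hω => huniq ω fun v => (hω v).trans (hFval v).symm⟩
  refine ⟨hEU, fun ω hω => ?_⟩
  have h1' : ω = ω' := by
    have e1 := huniq ω (fun v => (hω v).trans (hFval v).symm)
    have e2 := huniq ω' (fun v => (hω'sol v).trans (hFval v).symm)
    rw [e1, e2]
  subst h1'
  apply Prod.ext
  · simp only [hω', Prod.fst_add, Prod.smul_fst, smul_smul, mul_inv_cancel₀ hα2, one_smul]
    abel
  · simp only [hω', Prod.snd_add, Prod.smul_snd, smul_smul, mul_inv_cancel₀ hα2, one_smul,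
      zero_add]
end
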